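/- Let K be a quadratic number field. The Dirichlet series C_K(s) = ζ(s)^{-1} Σ_{m≥1} m^{-s} Π_{𝔭|m̃}(1+N(𝔭)^{-1})^{-1} Π_{p|m̃}(1 - p^{-2} Π_{𝔭|p}(1+N(𝔭)^{-1})^{-1})^{-1}, where m̃ = m/(m,2D_K), converges absolutely for Re(s) > 1 and extends holomorphically to Re(s) > 1/2. -/

import Mathlib

open NumberField

open scoped Classical in
/-- The coefficient
`Π_{𝔭|m̃}(1+N(𝔭)^{-1})^{-1} · Π_{p|m̃}(1 - p^{-2} Π_{𝔭|p}(1+N(𝔭)^{-1})^{-1})^{-1}`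
with `m̃ = m/(m, 2D_K)`, where `𝔭` runs over prime ideals of `O_K` and `p` over
rational primes. -/
noncomputable def CKcoeff (K : Type*) [Field K] [NumberField K] (m : ℕ) : ℝ :=
  let mt : ℕ := m / Nat.gcd m (2 * (discr K).natAbs)
  (∏ 𝔭 ∈ (UniqueFactorizationMonoid.normalizedFactors
      (Ideal.span {(mt : 𝓞 K)} : Ideal (𝓞 K))).toFinset,
    (1 + (Ideal.absNorm 𝔭 : ℝ)⁻¹)⁻¹) *
  ∏ p ∈ mt.primeFactors,
    (1 - (p : ℝ) ^ (-2 : ℤ) *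
      ∏ 𝔭 ∈ (UniqueFactorizationMonoid.normalizedFactors
          (Ideal.span {(p : 𝓞 K)} : Ideal (𝓞 K))).toFinset,
        (1 + (Ideal.absNorm 𝔭 : ℝ)⁻¹)⁻¹)⁻¹

/-!
Write `ñ = n / (n, g)` with `g = 2 |D_K|`, let `A_p = ∏_{𝔭 ∣ p} (1 + N𝔭⁻¹)⁻¹` and let
`f p = A_p (1 - p⁻² A_p)⁻¹` be the local factor. Sorting the prime ideals dividing `ñ` by the
rational prime below them gives `c_K(n) = ∏_{p ∣ ñ} f p`. Hence `c_K = 1 ⋆ a`, where `a` is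
supported on the integers `d = ∏_{p ∈ S} p ^ (v_p(g) + 1)` and equals `∏_{p ∈ S} (f p - 1)` there.
At most `[K : ℚ]` prime ideals lie over `p`, each of norm at least `p`, so
`|f p - 1| ≤ [K : ℚ] / p`, and therefore `|a d| ≪ d^(-1/2)`: only the finitely many primes with
`p ∣ g` or `p < [K : ℚ]²` contribute factors larger than `1`. So `L(a, s)` converges absolutely
and is holomorphic for `Re s > 1/2`, and for `Re s > 1` the series of `c_K` converges absolutely
with sum `ζ(s) L(a, s)`.
-/

open UniqueFactorizationMonoid Finset LSeries
open scoped LSeries.notation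

section Exceeding

variable {R : Type*} [CommRing R] (g : ℕ)

def leastExceeding (S : Finset ℕ) : ℕ := ∏ p ∈ S, p ^ (g.factorization p + 1)

def exceedingCoeff (f : ℕ → R) (d : ℕ) : R :=
  if leastExceeding g d.primeFactors = d then ∏ p ∈ d.primeFactors, (f p - 1) else 0

variable {g} {S : Finset ℕ}

lemma leastExceeding_ne_zero (hS : ∀ p ∈ S, p.Prime) : leastExceeding g S ≠ 0 :=
  prod_ne_zero_iff.mpr fun p hp ↦ pow_ne_zero _ (hS p hp).ne_zero

lemma factorization_leastExceeding (hS : ∀ p ∈ S, p.Prime) (q : ℕ) :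
    (leastExceeding g S).factorization q = if q ∈ S then g.factorization q + 1 else 0 := by
  rw [leastExceeding, Nat.factorization_prod fun p hp ↦ pow_ne_zero _ (hS p hp).ne_zero,
    sum_apply', sum_congr rfl fun p hp ↦ by
      rw [(hS p hp).factorization_pow, Finsupp.single_apply], sum_ite_eq']

lemma primeFactors_leastExceeding (hS : ∀ p ∈ S, p.Prime) :
    (leastExceeding g S).primeFactors = S := by
  ext q
  rw [← Nat.support_factorization, Finsupp.mem_support_iff, factorization_leastExceeding hS]
  split_ifs <;> simp_all

lemma mem_primeFactors_div_gcd_iff {n p : ℕ} (hg : g ≠ 0) (hn : n ≠ 0) :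
    p ∈ (n / n.gcd g).primeFactors ↔ g.factorization p < n.factorization p := by
  rw [← Nat.support_factorization, Finsupp.mem_support_iff,
    Nat.factorization_div (Nat.gcd_dvd_left n g), Nat.factorization_gcd hn hg]
  simp only [Finsupp.tsub_apply, Finsupp.inf_apply]
  omega

lemma leastExceeding_dvd_iff {n : ℕ} (hg : g ≠ 0) (hn : n ≠ 0) (hS : ∀ p ∈ S, p.Prime) :
    leastExceeding g S ∣ n ↔ S ⊆ (n / n.gcd g).primeFactors := by
  rw [← Nat.factorization_le_iff_dvd (leastExceeding_ne_zero hS) hn]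
  refine ⟨fun h p hp ↦ ?_, fun h q ↦ ?_⟩
  · have := h p
    rw [factorization_leastExceeding hS, if_pos hp] at this
    exact (mem_primeFactors_div_gcd_iff hg hn).mpr this
  · rw [factorization_leastExceeding hS]
    split_ifs with hq
    · exact (mem_primeFactors_div_gcd_iff hg hn).mp (h hq)
    · exact Nat.zero_le _

lemma exceedingCoeff_leastExceeding (f : ℕ → R) (hS : ∀ p ∈ S, p.Prime) :
    exceedingCoeff g f (leastExceeding g S) = ∏ p ∈ S, (f p - 1) := by
  rw [exceedingCoeff, primeFactors_leastExceeding hS, if_pos rfl]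

theorem sum_divisors_exceedingCoeff (f : ℕ → R) {n : ℕ} (hg : g ≠ 0) (hn : n ≠ 0) :
    ∑ d ∈ n.divisors, exceedingCoeff g f d = ∏ p ∈ (n / n.gcd g).primeFactors, f p := by
  set T := (n / n.gcd g).primeFactors
  have hprime {S} (hS : S ∈ T.powerset) : ∀ p ∈ S, p.Prime :=
    fun _ hp ↦ Nat.prime_of_mem_primeFactors (mem_powerset.mp hS hp)
  have himage : T.powerset.image (leastExceeding g) ⊆ n.divisors := by
    intro d hd
    obtain ⟨S, hS, rfl⟩ := mem_image.mp hd
    exact Nat.mem_divisors.mpr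
      ⟨(leastExceeding_dvd_iff hg hn (hprime hS)).mpr (mem_powerset.mp hS), hn⟩
  have hzero : ∀ d ∈ n.divisors, d ∉ T.powerset.image (leastExceeding g) →
      exceedingCoeff g f d = 0 := by
    intro d hd hnot
    refine if_neg fun hfix ↦ hnot (mem_image.mpr ⟨d.primeFactors, mem_powerset.mpr ?_, hfix⟩)
    refine (leastExceeding_dvd_iff hg hn fun _ ↦ Nat.prime_of_mem_primeFactors).mp ?_
    rw [hfix]
    exact Nat.dvd_of_mem_divisors hd
  have hinj : Set.InjOn (leastExceeding g) T.powerset := fun S hS S' hS' h ↦ by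
    rw [← primeFactors_leastExceeding (hprime hS), h, primeFactors_leastExceeding (hprime hS')]
  rw [← sum_subset himage hzero, sum_image hinj,
    sum_congr rfl fun S hS ↦ exceedingCoeff_leastExceeding f (hprime hS)]
  simpa using (prod_add_one (f := fun p ↦ f p - 1) T).symm

end Exceeding

lemma prod_le_prod_max_one {ι : Type*} [DecidableEq ι] {S E : Finset ι} {h : ι → ℝ}
    (h0 : ∀ i ∈ S, 0 ≤ h i) (h1 : ∀ i ∈ S, i ∉ E → h i ≤ 1) :
    ∏ i ∈ S, h i ≤ ∏ i ∈ E, max (h i) 1 :=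
  calc ∏ i ∈ S, h i ≤ ∏ i ∈ S, max (h i) 1 :=
        prod_le_prod h0 fun _ _ ↦ le_max_left _ _
    _ ≤ ∏ i ∈ S ∪ E, max (h i) 1 :=
        prod_le_prod_of_subset_of_one_le subset_union_left
          (fun _ _ ↦ zero_le_one.trans (le_max_right _ _)) fun _ _ _ ↦ le_max_right _ _
    _ = ∏ i ∈ E, max (h i) 1 := by
        refine (prod_subset subset_union_right fun i hi hiE ↦ max_eq_right ?_).symm
        exact h1 i ((mem_union.mp hi).resolve_right hiE) hiE

section Bound

variable {g : ℕ} {f : ℕ → ℝ} {c : ℝ}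

lemma abs_exceedingCoeff_mul_sqrt_le (hc : 0 ≤ c) (hf : ∀ p, p.Prime → |f p - 1| ≤ c / p)
    (d : ℕ) : |exceedingCoeff g f d| * √d ≤ ∏ p ∈ g.primeFactors ∪ range ⌈c ^ 2⌉₊,
      max (c / p * √(p ^ (g.factorization p + 1) : ℕ)) 1 := by
  unfold exceedingCoeff
  split_ifs with hfix
  swap
  · rw [abs_zero, zero_mul]
    exact prod_nonneg fun _ _ ↦ zero_le_one.trans (le_max_right _ _)
  set S := d.primeFactors
  have hS : ∀ p ∈ S, p.Prime := fun _ ↦ Nat.prime_of_mem_primeFactors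
  rw [← hfix, leastExceeding, Nat.cast_prod, Real.sqrt_prod _ fun _ _ ↦ Nat.cast_nonneg _,
    abs_prod, ← prod_mul_distrib]
  refine (prod_le_prod (fun _ _ ↦ by positivity) fun p hp ↦ ?_).trans
    (prod_le_prod_max_one (fun _ _ ↦ by positivity) fun p hp hpE ↦ ?_)
  · exact mul_le_mul_of_nonneg_right (hf p (hS p hp)) (Real.sqrt_nonneg _)
  · obtain ⟨hpg, hpc⟩ : p ∉ g.primeFactors ∧ ¬ p < ⌈c ^ 2⌉₊ := by simpa using hpE
    have hp0 : (0 : ℝ) < p := by exact_mod_cast (hS p hp).pos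
    rw [Finsupp.notMem_support_iff.mp (by rwa [Nat.support_factorization]), zero_add, pow_one,
      div_mul_eq_mul_div, div_le_one hp0]
    have hcp : c ≤ √p := Real.le_sqrt_of_sq_le (Nat.ceil_le.mp (not_lt.mp hpc))
    calc c * √p ≤ √p * √p := mul_le_mul_of_nonneg_right hcp (Real.sqrt_nonneg _)
      _ = p := Real.mul_self_sqrt hp0.le

theorem abscissaOfAbsConv_exceedingCoeff_le (hc : 0 ≤ c)
    (hf : ∀ p, p.Prime → |f p - 1| ≤ c / p) :
    abscissaOfAbsConv (fun d ↦ ((exceedingCoeff g f d : ℝ) : ℂ)) ≤ (1 / 2 : ℝ) := by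
  have hbound : ∃ C, ∀ d ≠ 0,
      ‖((exceedingCoeff g f d : ℝ) : ℂ)‖ ≤ C * (d : ℝ) ^ (-(1 / 2) : ℝ) :=
    ⟨_, fun d _ ↦ by
      rw [Complex.norm_real, Real.norm_eq_abs, Real.rpow_neg (Nat.cast_nonneg _),
        ← Real.sqrt_eq_rpow, le_mul_inv_iff₀ (by positivity)]
      exact abs_exceedingCoeff_mul_sqrt_le hc hf d⟩
  convert abscissaOfAbsConv_le_of_le_const_mul_rpow hbound using 1
  rw [← EReal.coe_one, ← EReal.coe_add]
  norm_num

end Bound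

lemma abs_mul_inv_one_sub_sq_mul_sub_one_le {A u c : ℝ} (hu0 : 0 ≤ u) (hu : u ≤ 1 / 2)
    (hc : 1 ≤ c) (hA : 1 - c * u ≤ A) (hA1 : A ≤ 1) : |A * (1 - u ^ 2 * A)⁻¹ - 1| ≤ c * u := by
  have hd : 0 < 1 - u ^ 2 * A := by nlinarith
  rw [← div_eq_mul_inv, abs_le, le_sub_iff_add_le, sub_le_iff_le_add, le_div_iff₀ hd,
    div_le_iff₀ hd]
  constructor
  · nlinarith [sq_nonneg (u * A)]
  · nlinarith [mul_nonneg (sub_nonneg.2 hA1) (by positivity : 0 ≤ u ^ 2 * (1 + c * u)),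
      mul_nonneg (sub_nonneg.2 hc) (by nlinarith : 0 ≤ u * (1 - u ^ 2)),
      (by nlinarith : 0 ≤ u * (1 - u - u ^ 2))]

section PrimeIdeals

open scoped Classical

variable (K : Type*) [Field K] [NumberField K]

noncomputable def primeIdealFactors (m : ℕ) : Finset (Ideal (𝓞 K)) :=
  (normalizedFactors (Ideal.span {(m : 𝓞 K)})).toFinset

variable {K}

lemma mem_primeIdealFactors {m : ℕ} (hm : m ≠ 0) {𝔭 : Ideal (𝓞 K)} :
    𝔭 ∈ primeIdealFactors K m ↔ Prime 𝔭 ∧ (m : 𝓞 K) ∈ 𝔭 := by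
  rw [primeIdealFactors, Multiset.mem_toFinset, mem_normalizedFactors_iff (by simpa using hm),
    Ideal.dvd_span_singleton]

lemma absNorm_dvd_pow_finrank_of_mem_primeIdealFactors {m : ℕ} (hm : m ≠ 0)
    {𝔭 : Ideal (𝓞 K)} (h𝔭 : 𝔭 ∈ primeIdealFactors K m) :
    Ideal.absNorm 𝔭 ∣ m ^ Module.finrank ℚ K := by
  rw [← RingOfIntegers.rank, ← Ideal.absNorm_span_natCast]
  exact Ideal.absNorm_dvd_absNorm_of_le
    ((Ideal.span_singleton_le_iff_mem _).mpr ((mem_primeIdealFactors hm).mp h𝔭).2)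

lemma absNorm_ne_one_of_mem_primeIdealFactors {m : ℕ} (hm : m ≠ 0)
    {𝔭 : Ideal (𝓞 K)} (h𝔭 : 𝔭 ∈ primeIdealFactors K m) : Ideal.absNorm 𝔭 ≠ 1 := fun h ↦
  ((mem_primeIdealFactors hm).mp h𝔭).1.not_isUnit
    (Ideal.isUnit_iff.mpr (Ideal.absNorm_eq_one_iff.mp h))

lemma le_absNorm_of_mem_primeIdealFactors {p : ℕ} (hp : p.Prime) {𝔭 : Ideal (𝓞 K)}
    (h𝔭 : 𝔭 ∈ primeIdealFactors K p) : p ≤ Ideal.absNorm 𝔭 := by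
  obtain ⟨i, -, hi⟩ := (Nat.dvd_prime_pow hp).mp
    (absNorm_dvd_pow_finrank_of_mem_primeIdealFactors hp.ne_zero h𝔭)
  have hi0 : i ≠ 0 := by
    rintro rfl
    exact absNorm_ne_one_of_mem_primeIdealFactors hp.ne_zero h𝔭 (by simpa using hi)
  exact hi ▸ Nat.le_self_pow hi0 p

lemma disjoint_primeIdealFactors {p q : ℕ} (hp : p.Prime) (hq : q.Prime) (hpq : p ≠ q) :
    Disjoint (primeIdealFactors K p) (primeIdealFactors K q) := by
  refine disjoint_left.mpr fun 𝔭 h𝔭p h𝔭q ↦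
    absNorm_ne_one_of_mem_primeIdealFactors hp.ne_zero h𝔭p ?_
  exact Nat.eq_one_of_dvd_coprimes (((Nat.coprime_primes hp hq).mpr hpq).pow _ _)
    (absNorm_dvd_pow_finrank_of_mem_primeIdealFactors hp.ne_zero h𝔭p)
    (absNorm_dvd_pow_finrank_of_mem_primeIdealFactors hq.ne_zero h𝔭q)

lemma primeIdealFactors_eq_biUnion {m : ℕ} (hm : m ≠ 0) :
    primeIdealFactors K m = m.primeFactors.biUnion (primeIdealFactors K) := by
  ext 𝔭
  simp only [mem_biUnion, mem_primeIdealFactors hm]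
  constructor
  · rintro ⟨h𝔭, hm𝔭⟩
    have := Ideal.isPrime_of_prime h𝔭
    rw [Nat.prod_primeFactors_pow_factorization hm, Nat.cast_prod,
      Ideal.IsPrime.prod_mem_iff] at hm𝔭
    obtain ⟨p, hp, hp𝔭⟩ := hm𝔭
    refine ⟨p, hp, (mem_primeIdealFactors (Nat.prime_of_mem_primeFactors hp).ne_zero).mpr ⟨h𝔭, ?_⟩⟩
    exact this.mem_of_pow_mem _ (by exact_mod_cast hp𝔭)
  · rintro ⟨p, hp, h𝔭⟩
    rw [mem_primeIdealFactors (Nat.prime_of_mem_primeFactors hp).ne_zero] at h𝔭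
    obtain ⟨k, rfl⟩ := Nat.dvd_of_mem_primeFactors hp
    exact ⟨h𝔭.1, by simpa using Ideal.mul_mem_right _ _ h𝔭.2⟩

lemma card_primeIdealFactors_le {p : ℕ} (hp : p.Prime) :
    #(primeIdealFactors K p) ≤ Module.finrank ℚ K := by
  have hdvd : ∏ 𝔭 ∈ primeIdealFactors K p, 𝔭 ∣ Ideal.span {(p : 𝓞 K)} :=
    prod_primes_dvd _ (fun _ h𝔭 ↦ ((mem_primeIdealFactors hp.ne_zero).mp h𝔭).1)
      fun _ h𝔭 ↦ Ideal.dvd_span_singleton.mpr ((mem_primeIdealFactors hp.ne_zero).mp h𝔭).2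
  have hnorm : ∏ 𝔭 ∈ primeIdealFactors K p, Ideal.absNorm 𝔭 ∣ p ^ Module.finrank ℚ K := by
    rw [← map_prod, ← RingOfIntegers.rank, ← Ideal.absNorm_span_natCast]
    exact Ideal.absNorm_dvd_absNorm_of_le (Ideal.le_of_dvd hdvd)
  refine (Nat.pow_le_pow_iff_right hp.one_lt).mp ?_
  calc p ^ #(primeIdealFactors K p) ≤ ∏ 𝔭 ∈ primeIdealFactors K p, Ideal.absNorm 𝔭 :=
        prod_const p ▸ prod_le_prod' fun _ h𝔭 ↦ le_absNorm_of_mem_primeIdealFactors hp h𝔭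
    _ ≤ p ^ Module.finrank ℚ K := Nat.le_of_dvd (pow_pos hp.pos _) hnorm

variable (K)

noncomputable def localWeight (p : ℕ) : ℝ :=
  ∏ 𝔭 ∈ primeIdealFactors K p, (1 + (Ideal.absNorm 𝔭 : ℝ)⁻¹)⁻¹

noncomputable def localFactor (p : ℕ) : ℝ :=
  localWeight K p * (1 - (p : ℝ) ^ (-2 : ℤ) * localWeight K p)⁻¹

lemma CKcoeff_eq_prod_localFactor {n : ℕ} (hn : n ≠ 0) :
    CKcoeff K n = ∏ p ∈ (n / n.gcd (2 * (discr K).natAbs)).primeFactors, localFactor K p := by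
  have hmt : n / n.gcd (2 * (discr K).natAbs) ≠ 0 :=
    (Nat.div_pos (Nat.gcd_le_left _ (Nat.pos_of_ne_zero hn))
      (Nat.gcd_pos_of_pos_left _ (Nat.pos_of_ne_zero hn))).ne'
  have hdisj : ((n / n.gcd (2 * (discr K).natAbs)).primeFactors : Set ℕ).PairwiseDisjoint
      (primeIdealFactors K) := fun p hp q hq hpq ↦
    disjoint_primeIdealFactors (Nat.prime_of_mem_primeFactors hp)
      (Nat.prime_of_mem_primeFactors hq) hpq
  unfold localFactor localWeight
  rw [prod_mul_distrib, ← prod_biUnion hdisj, ← primeIdealFactors_eq_biUnion hmt]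
  rfl

variable {K}

lemma localWeight_le_one (p : ℕ) : localWeight K p ≤ 1 :=
  prod_le_one (fun _ _ ↦ by positivity) fun _ _ ↦
    inv_le_one_of_one_le₀ (le_add_of_nonneg_right (by positivity))

lemma one_sub_finrank_div_le_localWeight {p : ℕ} (hp : p.Prime) :
    1 - Module.finrank ℚ K / p ≤ localWeight K p := by
  have hp1 : (1 : ℝ) ≤ p := by exact_mod_cast hp.one_le
  have hcard : (#(primeIdealFactors K p) : ℝ) ≤ Module.finrank ℚ K := by
    exact_mod_cast card_primeIdealFactors_le hp
  calc 1 - Module.finrank ℚ K / p ≤ 1 + #(primeIdealFactors K p) * -(p : ℝ)⁻¹ := by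
        rw [mul_neg, ← div_eq_mul_inv, ← sub_eq_add_neg]
        gcongr
    _ ≤ (1 + -(p : ℝ)⁻¹) ^ #(primeIdealFactors K p) :=
        one_add_mul_le_pow (by linarith [inv_le_one_of_one_le₀ hp1]) _
    _ = ∏ _ ∈ primeIdealFactors K p, (1 - (p : ℝ)⁻¹) := by rw [prod_const, ← sub_eq_add_neg]
    _ ≤ localWeight K p := by
        refine prod_le_prod (fun _ _ ↦ sub_nonneg.2 (inv_le_one_of_one_le₀ hp1)) fun 𝔭 h𝔭 ↦ ?_
        have hN : (p : ℝ) ≤ Ideal.absNorm 𝔭 := by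
          exact_mod_cast le_absNorm_of_mem_primeIdealFactors hp h𝔭
        have hNinv : (Ideal.absNorm 𝔭 : ℝ)⁻¹ ≤ (p : ℝ)⁻¹ := inv_anti₀ (by positivity) hN
        rw [← one_div (1 + _), le_div_iff₀ (by positivity)]
        have hpN : (0 : ℝ) ≤ (p : ℝ)⁻¹ * (Ideal.absNorm 𝔭 : ℝ)⁻¹ := by positivity
        nlinarith

lemma abs_localFactor_sub_one_le {p : ℕ} (hp : p.Prime) :
    |localFactor K p - 1| ≤ Module.finrank ℚ K / p := by
  have hp2 : (2 : ℝ) ≤ p := by exact_mod_cast hp.two_le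
  rw [localFactor, zpow_neg, zpow_two, ← sq, ← inv_pow, div_eq_mul_inv]
  refine abs_mul_inv_one_sub_sq_mul_sub_one_le (by positivity) ?_ ?_
    (by rw [← div_eq_mul_inv]; exact one_sub_finrank_div_le_localWeight hp) (localWeight_le_one p)
  · rw [one_div]; exact inv_anti₀ two_pos hp2
  · exact_mod_cast Module.finrank_pos

end PrimeIdeals

section LSeriesShift

variable {f : ℕ → ℂ} {s : ℂ}

lemma LSeries.term_succ (m : ℕ) :
    term f s (m + 1) = f (m + 1) * ((m + 1 : ℕ) : ℂ) ^ (-s) := by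
  rw [term_of_ne_zero m.succ_ne_zero, Complex.cpow_neg, div_eq_mul_inv]

lemma LSeriesSummable.summable_norm_succ (h : LSeriesSummable f s) :
    Summable fun m : ℕ ↦ ‖f (m + 1) * ((m + 1 : ℕ) : ℂ) ^ (-s)‖ := by
  simpa only [term_succ] using (summable_nat_add_iff 1).mpr (summable_norm_iff.mpr h)

lemma LSeriesHasSum.tsum_succ_eq {a : ℂ} (h : LSeriesHasSum f s a) :
    ∑' m : ℕ, f (m + 1) * ((m + 1 : ℕ) : ℂ) ^ (-s) = a := by
  simpa only [term_succ, range_one, sum_singleton, term_zero, sub_zero] using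
    ((hasSum_nat_add_iff' 1).mpr h).tsum_eq

end LSeriesShift

lemma CKcoeff_eq_one_convolution (K : Type*) [Field K] [NumberField K] {n : ℕ} (hn : n ≠ 0) :
    (CKcoeff K n : ℂ) =
      (1 ⍟ fun d ↦ ((exceedingCoeff (2 * (discr K).natAbs) (localFactor K) d : ℝ) : ℂ)) n := by
  simp only [convolution_def, Pi.one_apply, one_mul]
  rw [Nat.sum_divisorsAntidiagonal' (f := fun _ d ↦
    ((exceedingCoeff (2 * (discr K).natAbs) (localFactor K) d : ℝ) : ℂ)),
    ← Complex.ofReal_sum, sum_divisors_exceedingCoeff _ (by simp [discr_ne_zero]) hn,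
    CKcoeff_eq_prod_localFactor K hn]

theorem CK_series_convergence_and_continuation_general
    (K : Type*) [Field K] [NumberField K] :
    (∀ s : ℂ, 1 < s.re →
      Summable fun m : ℕ => ‖(CKcoeff K (m + 1) : ℂ) * ((m + 1 : ℕ) : ℂ) ^ (-s)‖) ∧
    ∃ F : ℂ → ℂ, (∀ s : ℂ, 1 / 2 < s.re → DifferentiableAt ℂ F s) ∧
      ∀ s : ℂ, 1 < s.re →
        F s = (riemannZeta s)⁻¹ *
          ∑' m : ℕ, (CKcoeff K (m + 1) : ℂ) * ((m + 1 : ℕ) : ℂ) ^ (-s) := by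
  set a : ℕ → ℂ := fun d ↦ ((exceedingCoeff (2 * (discr K).natAbs) (localFactor K) d : ℝ) : ℂ)
  have ha : abscissaOfAbsConv a ≤ (1 / 2 : ℝ) :=
    abscissaOfAbsConv_exceedingCoeff_le (Nat.cast_nonneg _) fun _ ↦ abs_localFactor_sub_one_le
  have hCK {s : ℂ} (hs : 1 < s.re) :
      LSeriesHasSum (fun n ↦ (CKcoeff K n : ℂ)) s (riemannZeta s * LSeries a s) := by
    have ha_sum : LSeriesSummable a s :=
      LSeriesSummable_of_abscissaOfAbsConv_lt_re (ha.trans_lt (by exact_mod_cast (by linarith)))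
    rw [LSeriesHasSum_congr s _ (CKcoeff_eq_one_convolution K), ← LSeries_one_eq_riemannZeta hs]
    exact (LSeriesSummable_one_iff.mpr hs).LSeriesHasSum.convolution ha_sum.LSeriesHasSum
  refine ⟨fun s hs ↦ (hCK hs).LSeriesSummable.summable_norm_succ, LSeries a, fun s hs ↦ ?_,
    fun s hs ↦ ?_⟩
  · exact (LSeries_hasDerivAt (ha.trans_lt (by exact_mod_cast hs))).differentiableAt
  · rw [(hCK hs).tsum_succ_eq, inv_mul_cancel_left₀ (riemannZeta_ne_zero_of_one_lt_re hs)]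

/-- The Dirichlet series `C_K(s) = ζ(s)^{-1} Σ_{m≥1} c_K(m) m^{-s}` converges
absolutely for `Re(s) > 1` and extends holomorphically to `Re(s) > 1/2`. -/
theorem CK_series_convergence_and_continuation
    (K : Type*) [Field K] [NumberField K] (hK : Module.finrank ℚ K = 2) :
    (∀ s : ℂ, 1 < s.re →
      Summable fun m : ℕ => ‖(CKcoeff K (m + 1) : ℂ) * ((m + 1 : ℕ) : ℂ) ^ (-s)‖) ∧
    ∃ F : ℂ → ℂ, (∀ s : ℂ, 1 / 2 < s.re → DifferentiableAt ℂ F s) ∧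
      ∀ s : ℂ, 1 < s.re →
        F s = (riemannZeta s)⁻¹ *
          ∑' m : ℕ, (CKcoeff K (m + 1) : ℂ) * ((m + 1 : ℕ) : ℂ) ^ (-s) :=
  CK_series_convergence_and_continuation_general K
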